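/- For any grid point p ∈ B_m, the One-Step-Ahead algorithm maintains |α_t(p)| ≤ 1 for all rounds t, where α_t(p) = Σ_{s ≤ t} 1[p̃^s = p](p̃^s − y^s). -/
import Mathlib

open Finset
open scoped Classical

noncomputable def ECE {T : ℕ} (p y : Fin T → ℝ) : ℝ :=
  ∑ v ∈ Finset.univ.image p, |∑ t, if p t = v then p t - y t else 0|

noncomputable def calDist {T : ℕ} (p y : Fin T → ℝ) : ℝ :=
  sInf {c | ∃ q : Fin T → ℝ, ECE q y = 0 ∧ c = ∑ t, |p t - q t|}

noncomputable def bias {T : ℕ} (p y : Fin T → ℝ) (t : ℕ) (v : ℝ) : ℝ :=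
  ∑ s ∈ Finset.univ.filter (fun s : Fin T => (s : ℕ) < t), if p s = v then p s - y s else 0

lemma bias_succ {T : ℕ} (p y : Fin T → ℝ) (t : Fin T) (v : ℝ) :
    bias p y ((t : ℕ) + 1) v = bias p y t v + (if p t = v then p t - y t else 0) := by
  unfold bias
  have hset : Finset.univ.filter (fun s : Fin T => (s : ℕ) < (t : ℕ) + 1)
      = insert t (Finset.univ.filter (fun s : Fin T => (s : ℕ) < (t : ℕ))) := by
    ext s
    simp only [Finset.mem_filter, Finset.mem_univ, true_and, Finset.mem_insert, Fin.ext_iff]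
    omega
  rw [hset, Finset.sum_insert (by simp)]
  ring

theorem one_step_ahead_bias_le_one {T m : ℕ} (hm : 1 ≤ m)
    (y pt : Fin T → ℝ) (i : Fin T → ℕ)
    (hy : ∀ t, y t = 0 ∨ y t = 1)
    (hi : ∀ t, i t < m)
    (hsign : ∀ t : Fin T, bias pt y t ((i t : ℝ) / m) ≤ 0 ∧
      bias pt y t (((i t : ℝ) + 1) / m) ≥ 0)
    (hchoice : ∀ t : Fin T, pt t = (i t : ℝ) / m ∨ pt t = ((i t : ℝ) + 1) / m)
    (hargmin : ∀ t : Fin T, ∀ v ∈ ({(i t : ℝ) / m, ((i t : ℝ) + 1) / m} : Set ℝ),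
      |pt t - y t| ≤ |v - y t|) :
    ∀ (v : ℝ) (t : ℕ), t ≤ T → |bias pt y t v| ≤ 1 := by
  have hm0 : (0 : ℝ) < m := by exact_mod_cast Nat.lt_of_lt_of_le Nat.zero_lt_one hm
  intro v t
  induction t with
  | zero => intro _; simp [bias]
  | succ t ih =>
    intro htT
    have htT' : t < T := htT
    set ft : Fin T := ⟨t, htT'⟩ with hft
    have ihv := ih (Nat.le_of_lt htT')
    have hstep : bias pt y (t + 1) v
        = bias pt y t v + (if pt ft = v then pt ft - y ft else 0) := bias_succ pt y ft v
    have h1m : (0 : ℝ) < 1 / m := by positivity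
    have him : ((i ft : ℝ) + 1) / m ≤ 1 := by
      rw [div_le_one hm0]
      have h' : (i ft : ℕ) + 1 ≤ m := hi ft
      exact_mod_cast h'
    have hi0 : (0 : ℝ) ≤ (i ft : ℝ) / m := by positivity
    have hi1 : (i ft : ℝ) / m ≤ 1 := by
      rw [div_le_one hm0]
      have h' : (i ft : ℕ) ≤ m := le_of_lt (hi ft)
      exact_mod_cast h'
    by_cases h : pt ft = v
    · rw [hstep, if_pos h]
      rcases hy ft with h0 | h1
      · -- y ft = 0 : the algorithm predicts i/m
        have hc : pt ft = (i ft : ℝ) / m := by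
          rcases hchoice ft with hc | hc
          · exact hc
          · exfalso
            have harg := hargmin ft ((i ft : ℝ) / m) (Set.mem_insert _ _)
            rw [hc, h0, sub_zero, sub_zero, abs_of_nonneg (by positivity),
              abs_of_nonneg hi0, add_div] at harg
            linarith
        have hb : bias pt y t ((i ft : ℝ) / m) ≤ 0 := (hsign ft).1
        subst h
        rw [hc] at ihv ⊢
        rw [h0, abs_le] at *
        constructor <;> [linarith; linarith]
      · -- y ft = 1 : the algorithm predicts (i+1)/m
        have hc : pt ft = ((i ft : ℝ) + 1) / m := by
          rcases hchoice ft with hc | hc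
          · exfalso
            have harg := hargmin ft (((i ft : ℝ) + 1) / m)
              (Set.mem_insert_iff.mpr (Or.inr rfl))
            have e1 : (i ft : ℝ) / m - 1 ≤ 0 := by linarith
            have e2 : ((i ft : ℝ) + 1) / m - 1 ≤ 0 := by linarith
            rw [hc, h1, abs_of_nonpos e1, abs_of_nonpos e2, add_div] at harg
            linarith
          · exact hc
        have hb : bias pt y t (((i ft : ℝ) + 1) / m) ≥ 0 := (hsign ft).2
        have hp0 : (0 : ℝ) ≤ ((i ft : ℝ) + 1) / m := by positivity
        subst h
        rw [hc] at ihv ⊢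
        rw [h1, abs_le] at *
        constructor <;> [linarith; linarith]
    · rw [hstep, if_neg h, add_zero]; exact ihv
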